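/- arXiv:2101.10007 — 2 statements merged into one kernel-verified Lean document; each statement's English description precedes it below -/
import Mathlib

section
/- Let g be a random vector in ℝⁿ with mean E[g] = ∇J(w) and covariance matrix G, let ε > 0, and set ρ = max over the eigenvalues λ of E[xxᵀ] of (1 - ελ)². Then E[J(w - εg)] ≤ J(w*) + ρ (w - w*)ᵀ Σ_x (w - w*) + ε² Tr(Σ_x G); equivalently, E[J(w - εg)] - J(w*) ≤ ρ (J(w) - J(w*)) + ε² Tr(Σ_x G). -/
/-!
Expanding the square and using the normal equation, `J u - J w* = ½ (u - w*)ᵀ E[xxᵀ] (u - w*)`.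
With `v = w - w*`, the random point `w - εg - w* = v - εg` has mean `(1 - ε E[xxᵀ]) v` and
covariance matrix `ε² G`, so the expected quadratic form splits into the quadratic form at the
mean plus `ε² Tr(E[xxᵀ] G)`. Finally `ρ A - (1 - εA) A (1 - εA)` with `A = E[xxᵀ]` is `f(A)` for
`f t = t (ρ - (1 - εt)²)`, which is nonnegative on the nonnegative spectrum of `A`.
-/

open MeasureTheory ProbabilityTheory Matrix
open scoped MatrixOrder

section SecondMoments

variable {α ι : Type*} [MeasurableSpace α] {ν : Measure α} [Fintype ι] {X : α → ι → ℝ}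

lemma dotProduct_mul_eq_sum (x u : ι → ℝ) (y : ℝ) : (x ⬝ᵥ u) * y = ∑ i, u i * (x i * y) := by
  simp only [dotProduct, Finset.sum_mul]
  exact Finset.sum_congr rfl fun i _ => by ring

lemma dotProduct_mulVec_eq_sum (A : Matrix ι ι ℝ) (x : ι → ℝ) :
    x ⬝ᵥ A *ᵥ x = ∑ i, ∑ j, A i j * (x i * x j) := by
  simp only [dotProduct, mulVec, Finset.mul_sum]
  exact Finset.sum_congr rfl fun i _ => Finset.sum_congr rfl fun j _ => by ring

lemma integrable_dotProduct_mul {f : α → ℝ} (hf : ∀ i, Integrable (fun a => X a i * f a) ν)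
    (u : ι → ℝ) : Integrable (fun a => (X a ⬝ᵥ u) * f a) ν := by
  simp only [dotProduct_mul_eq_sum]
  exact integrable_finsetSum _ fun i _ => (hf i).const_mul (u i)

lemma integral_dotProduct_mul {f : α → ℝ} (hf : ∀ i, Integrable (fun a => X a i * f a) ν)
    (u : ι → ℝ) : ∫ a, (X a ⬝ᵥ u) * f a ∂ν = u ⬝ᵥ fun i => ∫ a, X a i * f a ∂ν := by
  simp only [dotProduct_mul_eq_sum]
  rw [integral_finsetSum _ fun i _ => (hf i).const_mul (u i)]
  simp only [integral_const_mul, dotProduct]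

variable {M : Matrix ι ι ℝ} (hX : ∀ i j, Integrable (fun a => X a i * X a j) ν)
  (hM : ∀ i j, M i j = ∫ a, X a i * X a j ∂ν)
include hX

lemma integrable_mul_dotProduct (i : ι) (u : ι → ℝ) :
    Integrable (fun a => X a i * (X a ⬝ᵥ u)) ν := by
  simp only [mul_comm (X _ i)]
  exact integrable_dotProduct_mul (fun j => hX j i) u

lemma integrable_dotProduct_mul_dotProduct (u u' : ι → ℝ) :
    Integrable (fun a => (X a ⬝ᵥ u) * (X a ⬝ᵥ u')) ν :=
  integrable_dotProduct_mul (fun i => integrable_mul_dotProduct hX i u') u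

include hM in
lemma integral_dotProduct_mul_dotProduct (u u' : ι → ℝ) :
    ∫ a, (X a ⬝ᵥ u) * (X a ⬝ᵥ u') ∂ν = u ⬝ᵥ M *ᵥ u' := by
  rw [integral_dotProduct_mul fun i => integrable_mul_dotProduct hX i u']
  congr 1
  ext i
  calc ∫ a, X a i * (X a ⬝ᵥ u') ∂ν = ∫ a, (X a ⬝ᵥ u') * X a i ∂ν := by simp only [mul_comm]
    _ = u' ⬝ᵥ fun j => ∫ a, X a j * X a i ∂ν := integral_dotProduct_mul (fun j => hX j i) u'
    _ = (M *ᵥ u') i := by simp only [mulVec, dotProduct, hM, mul_comm]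

end SecondMoments

section LeastSquares

variable {ι : Type*} {μ : Measure ((ι → ℝ) × ℝ)} {Exx : Matrix ι ι ℝ}
  (hExx : ∀ i j, Exx i j = ∫ p, p.1 i * p.1 j ∂μ)
include hExx

lemma isSymm_of_eq_integral_mul : Exx.IsSymm := by
  ext i j
  simp only [transpose_apply, hExx, mul_comm]

variable [Fintype ι] {Exy : ι → ℝ} (hxx : ∀ i j, Integrable (fun p => p.1 i * p.1 j) μ)
include hxx

lemma posSemidef_of_eq_integral_mul : Exx.PosSemidef := by
  refine .of_dotProduct_mulVec_nonneg
    (isHermitian_iff_isSymm.2 (isSymm_of_eq_integral_mul hExx)) fun x => ?_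
  rw [star_trivial, ← integral_dotProduct_mul_dotProduct (X := Prod.fst) hxx hExx]
  exact integral_nonneg fun p => mul_self_nonneg _

variable (hxy : ∀ i, Integrable (fun p => p.1 i * p.2) μ)
  (hExy : ∀ i, Exy i = ∫ p, p.1 i * p.2 ∂μ) (hyy : Integrable (fun p => p.2 ^ 2) μ)
include hxy hExy hyy

lemma integral_sq_sub_dotProduct (u : ι → ℝ) :
    ∫ p, (p.2 - p.1 ⬝ᵥ u) ^ 2 ∂μ = ∫ p, p.2 ^ 2 ∂μ - 2 * (u ⬝ᵥ Exy) + u ⬝ᵥ Exx *ᵥ u := by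
  have hcross := integrable_dotProduct_mul (X := Prod.fst) hxy u
  have hexpand : (fun p : (ι → ℝ) × ℝ => (p.2 - p.1 ⬝ᵥ u) ^ 2)
      = fun p => (p.2 ^ 2 - 2 * ((p.1 ⬝ᵥ u) * p.2)) + (p.1 ⬝ᵥ u) * (p.1 ⬝ᵥ u) := by
    funext p; ring
  rw [hexpand, integral_add (hyy.sub' (hcross.const_mul 2))
      (integrable_dotProduct_mul_dotProduct hxx u u), integral_sub hyy (hcross.const_mul 2),
    integral_const_mul, integral_dotProduct_mul hxy, integral_dotProduct_mul_dotProduct hxx hExx,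
    ← funext hExy]

lemma integral_sq_sub_dotProduct_sub_of_mulVec_eq {wstar : ι → ℝ} (hws : Exx *ᵥ wstar = Exy)
    (u : ι → ℝ) :
    ∫ p, (p.2 - p.1 ⬝ᵥ u) ^ 2 ∂μ - ∫ p, (p.2 - p.1 ⬝ᵥ wstar) ^ 2 ∂μ
      = (u - wstar) ⬝ᵥ Exx *ᵥ (u - wstar) := by
  have hsymm : wstar ⬝ᵥ Exx *ᵥ u = u ⬝ᵥ Exx *ᵥ wstar := by
    rw [dotProduct_mulVec, ← mulVec_transpose, isSymm_of_eq_integral_mul hExx, dotProduct_comm]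
  rw [integral_sq_sub_dotProduct hExx hxx hxy hExy hyy,
    integral_sq_sub_dotProduct hExx hxx hxy hExy hyy, ← hws]
  simp only [mulVec_sub, dotProduct_sub, sub_dotProduct]
  linarith

end LeastSquares

section CovarianceMatrix

variable {Ω ι : Type*} [MeasurableSpace Ω] {P : Measure Ω}

noncomputable def covarianceMatrix (Z : Ω → ι → ℝ) (P : Measure Ω) : Matrix ι ι ℝ :=
  Matrix.of fun i j => cov[fun ω => Z ω i, fun ω => Z ω j; P]

lemma covarianceMatrix_isSymm (Z : Ω → ι → ℝ) : (covarianceMatrix Z P).IsSymm := by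
  ext i j
  exact covariance_comm _ _

lemma covarianceMatrix_const_sub_smul [IsProbabilityMeasure P] {Z : Ω → ι → ℝ}
    (hZ : ∀ i, Integrable (fun ω => Z ω i) P) (v : ι → ℝ) (ε : ℝ) :
    covarianceMatrix (fun ω => v - ε • Z ω) P = ε ^ 2 • covarianceMatrix Z P := by
  ext i j
  simp only [covarianceMatrix, of_apply, Matrix.smul_apply, Pi.sub_apply, Pi.smul_apply,
    smul_eq_mul]
  rw [covariance_const_sub_left ((hZ i).const_mul ε),
    covariance_const_sub_right ((hZ j).const_mul ε), covariance_const_mul_left,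
    covariance_const_mul_right]
  ring

lemma integral_mul_eq_add_covariance [IsProbabilityMeasure P] {X Y : Ω → ℝ} (hX : MemLp X 2 P)
    (hY : MemLp Y 2 P) : ∫ ω, X ω * Y ω ∂P = (∫ ω, X ω ∂P) * (∫ ω, Y ω ∂P) + cov[X, Y; P] := by
  rw [covariance_eq_sub hX hY]
  simp only [Pi.mul_apply]
  ring

variable {Z : Ω → ι → ℝ} (hZ : ∀ i, MemLp (fun ω => Z ω i) 2 P)
include hZ

lemma memLp_const_sub_smul [IsFiniteMeasure P] (v : ι → ℝ) (ε : ℝ) (i : ι) :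
    MemLp (fun ω => (v - ε • Z ω) i) 2 P :=
  (memLp_const (v i)).sub ((hZ i).const_mul ε)

variable [Fintype ι] (A : Matrix ι ι ℝ)

lemma integrable_dotProduct_mulVec : Integrable (fun ω => Z ω ⬝ᵥ A *ᵥ Z ω) P := by
  simp only [dotProduct_mulVec_eq_sum]
  exact integrable_finsetSum _ fun i _ => integrable_finsetSum _ fun j _ =>
    ((hZ i).integrable_mul (hZ j)).const_mul _

lemma integral_dotProduct_mulVec [IsProbabilityMeasure P] :
    ∫ ω, Z ω ⬝ᵥ A *ᵥ Z ω ∂P = (fun i => ∫ ω, Z ω i ∂P) ⬝ᵥ A *ᵥ (fun i => ∫ ω, Z ω i ∂P)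
      + (A * covarianceMatrix Z P).trace := by
  simp only [dotProduct_mulVec_eq_sum]
  have hterm (i j : ι) : Integrable (fun ω => A i j * (Z ω i * Z ω j)) P :=
    ((hZ i).integrable_mul (hZ j)).const_mul _
  rw [integral_finsetSum _ fun i _ => integrable_finsetSum _ fun j _ => hterm i j]
  simp only [trace, diag_apply, mul_apply, ← (covarianceMatrix_isSymm Z).apply,
    ← Finset.sum_add_distrib]
  refine Finset.sum_congr rfl fun i _ => ?_
  rw [integral_finsetSum _ fun j _ => hterm i j]
  refine Finset.sum_congr rfl fun j _ => ?_
  rw [integral_const_mul, integral_mul_eq_add_covariance (hZ i) (hZ j)]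
  simp only [covarianceMatrix, of_apply]
  ring

lemma integral_dotProduct_mulVec_const_sub_smul [IsProbabilityMeasure P] (v : ι → ℝ) (ε : ℝ) :
    ∫ ω, (v - ε • Z ω) ⬝ᵥ A *ᵥ (v - ε • Z ω) ∂P
      = (v - ε • fun i => ∫ ω, Z ω i ∂P) ⬝ᵥ A *ᵥ (v - ε • fun i => ∫ ω, Z ω i ∂P)
        + ε ^ 2 * (A * covarianceMatrix Z P).trace := by
  have hint (i : ι) : Integrable (fun ω => Z ω i) P := (hZ i).integrable one_le_two
  have hmean : (fun i => ∫ ω, (v - ε • Z ω) i ∂P) = v - ε • fun i => ∫ ω, Z ω i ∂P := by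
    ext i
    simp only [Pi.sub_apply, Pi.smul_apply, smul_eq_mul]
    rw [integral_sub (integrable_const _) ((hint i).const_mul ε), integral_const_mul,
      integral_const, probReal_univ, one_smul]
  rw [integral_dotProduct_mulVec (memLp_const_sub_smul hZ v ε), hmean,
    covarianceMatrix_const_sub_smul hint, Matrix.mul_smul, trace_smul, smul_eq_mul]

end CovarianceMatrix

namespace Matrix.PosSemidef

variable {ι : Type*} [Fintype ι] [DecidableEq ι] {A : Matrix ι ι ℝ} (hA : A.PosSemidef) {ε ρ : ℝ}
  (hρ : ∀ i, (1 - ε * hA.1.eigenvalues i) ^ 2 ≤ ρ)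
include hρ

lemma posSemidef_smul_sub_mul_mul : (ρ • A - (1 - ε • A) * A * (1 - ε • A)).PosSemidef := by
  have hcfc : cfc (fun t : ℝ => ρ * t - (1 - ε * t) * t * (1 - ε * t)) A
      = ρ • A - (1 - ε • A) * A * (1 - ε • A) := by
    rw [cfc_sub _ _ A, cfc_const_mul _ _ A, cfc_mul _ _ A, cfc_mul _ _ A, cfc_sub _ _ A,
      cfc_const_mul _ _ A, cfc_const_one ℝ A, cfc_id' ℝ A]
  rw [← hcfc, ← nonneg_iff_posSemidef]
  refine cfc_nonneg fun t ht => ?_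
  obtain ⟨i, rfl⟩ := hA.1.spectrum_real_eq_range_eigenvalues ▸ ht
  nlinarith [hA.eigenvalues_nonneg i, hρ i]

lemma dotProduct_mulVec_sub_smul_mulVec_le (v : ι → ℝ) :
    (v - ε • A *ᵥ v) ⬝ᵥ A *ᵥ (v - ε • A *ᵥ v) ≤ ρ * (v ⬝ᵥ A *ᵥ v) := by
  have hB : (1 - ε • A) *ᵥ v = v - ε • A *ᵥ v := by
    rw [sub_mulVec, one_mulVec, smul_mulVec]
  have hBsymm : (1 - ε • A)ᵀ = 1 - ε • A := by
    rw [transpose_sub, transpose_one, transpose_smul, ← conjTranspose_eq_transpose_of_trivial,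
      hA.1.eq]
  have := (hA.posSemidef_smul_sub_mul_mul hρ).dotProduct_mulVec_nonneg v
  rw [star_trivial, sub_mulVec, dotProduct_sub, smul_mulVec, dotProduct_smul, smul_eq_mul,
    ← mulVec_mulVec, ← mulVec_mulVec, dotProduct_mulVec v (1 - ε • A), ← mulVec_transpose,
    hBsymm, hB] at this
  linarith

end Matrix.PosSemidef

theorem stmt5_general {n : ℕ} [NeZero n] (μ : Measure ((Fin n → ℝ) × ℝ))
    (hxx : ∀ i j : Fin n, Integrable (fun p => p.1 i * p.1 j) μ)
    (hxy : ∀ i : Fin n, Integrable (fun p => p.1 i * p.2) μ)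
    (hyy : Integrable (fun p => p.2 ^ 2) μ)
    (J : (Fin n → ℝ) → ℝ)
    (hJ : ∀ w : Fin n → ℝ, J w = (1 / 2) * ∫ p, (p.2 - p.1 ⬝ᵥ w) ^ 2 ∂μ)
    (Exx : Matrix (Fin n) (Fin n) ℝ)
    (hExx : ∀ i j, Exx i j = ∫ p, p.1 i * p.1 j ∂μ)
    (Exy : Fin n → ℝ)
    (hExy : ∀ i, Exy i = ∫ p, p.1 i * p.2 ∂μ)
    (Sx : Matrix (Fin n) (Fin n) ℝ) (hSx : Sx = (1 / 2 : ℝ) • Exx)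
    (wstar : Fin n → ℝ) (hws : Exx *ᵥ wstar = Exy)
    {Ω : Type*} [MeasurableSpace Ω] (P : Measure Ω) [IsProbabilityMeasure P]
    (g : Ω → Fin n → ℝ)
    (hgi : ∀ i, Integrable (fun ω => g ω i) P)
    (hgij : ∀ i j, Integrable (fun ω => g ω i * g ω j) P)
    (w : Fin n → ℝ) (ε : ℝ)
    (hmean : ∀ i, ∫ ω, g ω i ∂P = (Exx *ᵥ w - Exy) i)
    (G : Matrix (Fin n) (Fin n) ℝ)
    (hG : ∀ i j, G i j =
      ∫ ω, (g ω i - (Exx *ᵥ w - Exy) i) * (g ω j - (Exx *ᵥ w - Exy) j) ∂P)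
    (hherm : Exx.IsHermitian)
    (ρ : ℝ)
    (hρ : ρ = Finset.univ.sup' Finset.univ_nonempty
      fun i => (1 - ε * hherm.eigenvalues i) ^ 2) :
    (∫ ω, J (w - ε • g ω) ∂P
      ≤ J wstar + ρ * ((w - wstar) ⬝ᵥ (Sx *ᵥ (w - wstar))) + ε ^ 2 * (Sx * G).trace)
    ∧ (∫ ω, J (w - ε • g ω) ∂P) - J wstar
      ≤ ρ * (J w - J wstar) + ε ^ 2 * (Sx * G).trace := by
  set v := w - wstar
  have hJ_sub (u : Fin n → ℝ) :
      J u - J wstar = (1 / 2) * ((u - wstar) ⬝ᵥ Exx *ᵥ (u - wstar)) := by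
    rw [hJ, hJ, ← mul_sub, integral_sq_sub_dotProduct_sub_of_mulVec_eq hExx hxx hxy hExy hyy hws]
  have hJg (ω : Ω) :
      J (w - ε • g ω) = J wstar + (1 / 2) * ((v - ε • g ω) ⬝ᵥ Exx *ᵥ (v - ε • g ω)) := by
    have h := hJ_sub (w - ε • g ω)
    rw [sub_right_comm] at h
    linarith
  have hg (i : Fin n) : MemLp (fun ω => g ω i) 2 P :=
    (memLp_two_iff_integrable_sq (hgi i).1).2 (by simpa only [sq] using hgij i i)
  have hm : (fun i => ∫ ω, g ω i ∂P) = Exx *ᵥ v := by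
    ext i
    rw [hmean, mulVec_sub, hws]
  have hGcov : covarianceMatrix g P = G := by
    ext i j
    simp only [hG, covarianceMatrix, of_apply, covariance, hmean]
  have hexp : ∫ ω, J (w - ε • g ω) ∂P = J wstar
      + (1 / 2) * ((v - ε • Exx *ᵥ v) ⬝ᵥ Exx *ᵥ (v - ε • Exx *ᵥ v)) + ε ^ 2 * (Sx * G).trace := by
    simp_rw [hJg]
    rw [integral_add (integrable_const _)
        ((integrable_dotProduct_mulVec (memLp_const_sub_smul hg v ε) Exx).const_mul _),
      integral_const, integral_const_mul, integral_dotProduct_mulVec_const_sub_smul hg, hm,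
      hGcov, hSx]
    simp only [probReal_univ, Matrix.smul_mul, trace_smul, smul_eq_mul]
    ring
  have hρ_le (i : Fin n) : (1 - ε * hherm.eigenvalues i) ^ 2 ≤ ρ :=
    hρ ▸ Finset.le_sup' (fun i => (1 - ε * hherm.eigenvalues i) ^ 2) (Finset.mem_univ i)
  have hcontract := (posSemidef_of_eq_integral_mul hExx hxx).dotProduct_mulVec_sub_smul_mulVec_le
    hρ_le v
  have hSv : (w - wstar) ⬝ᵥ Sx *ᵥ (w - wstar) = (1 / 2) * (v ⬝ᵥ Exx *ᵥ v) := by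
    rw [hSx, smul_mulVec, dotProduct_smul, smul_eq_mul]
  constructor
  · rw [hexp, hSv]; linarith
  · rw [hexp, hJ_sub]; linarith

theorem stmt5 {n : ℕ} [NeZero n] (μ : Measure ((Fin n → ℝ) × ℝ)) [IsProbabilityMeasure μ]
    (hxx : ∀ i j : Fin n, Integrable (fun p => p.1 i * p.1 j) μ)
    (hxy : ∀ i : Fin n, Integrable (fun p => p.1 i * p.2) μ)
    (hyy : Integrable (fun p => p.2 ^ 2) μ)
    (J : (Fin n → ℝ) → ℝ)
    (hJ : ∀ w : Fin n → ℝ, J w = (1 / 2) * ∫ p, (p.2 - p.1 ⬝ᵥ w) ^ 2 ∂μ)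
    (Exx : Matrix (Fin n) (Fin n) ℝ)
    (hExx : ∀ i j, Exx i j = ∫ p, p.1 i * p.1 j ∂μ)
    (Exy : Fin n → ℝ)
    (hExy : ∀ i, Exy i = ∫ p, p.1 i * p.2 ∂μ)
    (Sx : Matrix (Fin n) (Fin n) ℝ) (hSx : Sx = (1 / 2 : ℝ) • Exx)
    (wstar : Fin n → ℝ) (hws : Exx *ᵥ wstar = Exy)
    {Ω : Type*} [MeasurableSpace Ω] (P : Measure Ω) [IsProbabilityMeasure P]
    (g : Ω → Fin n → ℝ)
    (hgi : ∀ i, Integrable (fun ω => g ω i) P)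
    (hgij : ∀ i j, Integrable (fun ω => g ω i * g ω j) P)
    (w : Fin n → ℝ) (ε : ℝ) (hε : 0 < ε)
    (hmean : ∀ i, ∫ ω, g ω i ∂P = (Exx *ᵥ w - Exy) i)
    (G : Matrix (Fin n) (Fin n) ℝ)
    (hG : ∀ i j, G i j =
      ∫ ω, (g ω i - (Exx *ᵥ w - Exy) i) * (g ω j - (Exx *ᵥ w - Exy) j) ∂P)
    (hherm : Exx.IsHermitian)
    (ρ : ℝ)
    (hρ : ρ = Finset.univ.sup' Finset.univ_nonempty
      fun i => (1 - ε * hherm.eigenvalues i) ^ 2) :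
    (∫ ω, J (w - ε • g ω) ∂P
      ≤ J wstar + ρ * ((w - wstar) ⬝ᵥ (Sx *ᵥ (w - wstar))) + ε ^ 2 * (Sx * G).trace)
    ∧ (∫ ω, J (w - ε • g ω) ∂P) - J wstar
      ≤ ρ * (J w - J wstar) + ε ^ 2 * (Sx * G).trace :=
  stmt5_general μ hxx hxy hyy J hJ Exx hExx Exy hExy Sx hSx wstar hws P g hgi hgij w ε hmean G hG
    hherm ρ hρ
end

section
/- Under the hypotheses of the convergence theorem (scheduled stochastic gradient iteration with threshold λ > 0, stepsize ε > 0, conditional gradient mean ∇J(w_k) and covariance G, and ρ = max over eigenvalues λ̃ of E[xxᵀ] of (1 - ελ̃)² with ρ < 1), the iterates satisfy limsup_{N→∞} E[J(w_N)] ≤ J(w*) + (λ + ε² Tr(Σ_x G)) / (1 - ρ). -/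
/-!
Around its minimiser the loss is the quadratic form `J v = J w⋆ + ½ (v - w⋆)ᵀ A (v - w⋆)` with
`A = E[xxᵀ]`. A scheduled step costs at most `λ` more than the plain step `w - εg`. Writing
`u = w - w⋆` and `h = g - A u`, the plain step is `u - εAu - εh`: the noise `h` has zero conditional
mean given `w`, hence is orthogonal to the `w`-measurable part `u - εAu` and contributes exactly
`ε² tr(A G)`, while diagonalising `A` shows that `u ↦ u - εAu` contracts the quadratic form by `ρ`.
So `a_k = E J(w_k) - J w⋆ ≥ 0` satisfies `a_{k+1} ≤ ρ a_k + λ + ε² tr(Σ_x G)`, which bounds the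
limsup by the fixed point of this recursion.
-/

open MeasureTheory Matrix Filter

theorem limsup_le_add_div_of_sub_le_mul_sub {a : ℕ → ℝ} {L ρ c : ℝ} (hρ0 : 0 ≤ ρ) (hρ1 : ρ < 1)
    (hL : ∀ k, L ≤ a k) (hrec : ∀ k, a (k + 1) - L ≤ ρ * (a k - L) + c) :
    limsup a atTop ≤ L + c / (1 - ρ) := by
  set M := L + c / (1 - ρ)
  have hfix : ρ * (M - L) + c = M - L := by
    have : 1 - ρ ≠ 0 := by linarith
    simp only [M, add_sub_cancel_left]; field_simp; ring
  have hgeom : ∀ k, a k ≤ M + ρ ^ k * max (a 0 - M) 0 := by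
    intro k
    induction k with
    | zero => simp only [pow_zero, one_mul]; linarith [le_max_left (a 0 - M) 0]
    | succ k ih =>
      have := hrec k
      have : ρ * a k ≤ ρ * (M + ρ ^ k * max (a 0 - M) 0) := mul_le_mul_of_nonneg_left ih hρ0
      rw [pow_succ]; linarith
  have hlim : Tendsto (fun k => M + ρ ^ k * max (a 0 - M) 0) atTop (nhds M) := by
    simpa using ((tendsto_pow_atTop_nhds_zero_of_lt_one hρ0 hρ1).mul_const _).const_add M
  calc limsup a atTop ≤ limsup (fun k => M + ρ ^ k * max (a 0 - M) 0) atTop :=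
        limsup_le_limsup (.of_forall hgeom) (isCoboundedUnder_le_of_le atTop hL)
          hlim.isBoundedUnder_le
    _ = M := hlim.limsup_eq

section Spectral

variable {ι : Type*} [Fintype ι] [DecidableEq ι] {A : Matrix ι ι ℝ}

theorem Matrix.IsHermitian.star_eigenvectorUnitary_mulVec_mulVec (hA : A.IsHermitian)
    (z : ι → ℝ) (i : ι) :
    (star (hA.eigenvectorUnitary : Matrix ι ι ℝ) *ᵥ (A *ᵥ z)) i
      = hA.eigenvalues i * (star (hA.eigenvectorUnitary : Matrix ι ι ℝ) *ᵥ z) i := by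
  set V := (hA.eigenvectorUnitary : Matrix ι ι ℝ)
  have hdiag : star V * A * V = diagonal hA.eigenvalues := by
    simpa [Unitary.conjStarAlgAut_star_apply] using hA.conjStarAlgAut_star_eigenvectorUnitary
  have : star V * A = diagonal hA.eigenvalues * star V := by
    rw [← hdiag, Matrix.mul_assoc _ V, Unitary.mul_star_self_of_mem hA.eigenvectorUnitary.2,
      Matrix.mul_one]
  rw [mulVec_mulVec, this, ← mulVec_mulVec, mulVec_diagonal]

theorem Matrix.IsHermitian.dotProduct_mulVec_eq_sum_eigenvalues (hA : A.IsHermitian)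
    (x z : ι → ℝ) :
    x ⬝ᵥ (A *ᵥ z) = ∑ i, hA.eigenvalues i *
      ((star (hA.eigenvectorUnitary : Matrix ι ι ℝ) *ᵥ x) i
        * (star (hA.eigenvectorUnitary : Matrix ι ι ℝ) *ᵥ z) i) := by
  set V := (hA.eigenvectorUnitary : Matrix ι ι ℝ)
  have hV : x ᵥ* V = star V *ᵥ x := by
    rw [star_eq_conjTranspose, conjTranspose_eq_transpose_of_trivial, mulVec_transpose]
  calc x ⬝ᵥ (A *ᵥ z) = x ⬝ᵥ (V *ᵥ (star V *ᵥ (A *ᵥ z))) := by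
        rw [mulVec_mulVec, Unitary.mul_star_self_of_mem hA.eigenvectorUnitary.2, one_mulVec]
    _ = _ := by
        rw [dotProduct_mulVec, hV, dotProduct]
        exact Finset.sum_congr rfl fun i _ => by
          rw [hA.star_eigenvectorUnitary_mulVec_mulVec]; ring

theorem Matrix.PosSemidef.dotProduct_mulVec_sub_smul_mulVec_le_s10 (hA : A.PosSemidef) {ε ρ : ℝ}
    (hρ : ∀ i, (1 - ε * hA.1.eigenvalues i) ^ 2 ≤ ρ) (u : ι → ℝ) :
    (u - ε • (A *ᵥ u)) ⬝ᵥ (A *ᵥ (u - ε • (A *ᵥ u))) ≤ ρ * (u ⬝ᵥ (A *ᵥ u)) := by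
  rw [hA.1.dotProduct_mulVec_eq_sum_eigenvalues, hA.1.dotProduct_mulVec_eq_sum_eigenvalues,
    Finset.mul_sum]
  refine Finset.sum_le_sum fun i _ => ?_
  simp only [mulVec_sub, mulVec_smul, Pi.sub_apply, Pi.smul_apply, smul_eq_mul,
    hA.1.star_eigenvectorUnitary_mulVec_mulVec]
  have hnonneg := hA.eigenvalues_nonneg i
  set y := (star (hA.1.eigenvectorUnitary : Matrix ι ι ℝ) *ᵥ u) i
  calc _ = (1 - ε * hA.1.eigenvalues i) ^ 2 * (hA.1.eigenvalues i * (y * y)) := by ring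
    _ ≤ ρ * (hA.1.eigenvalues i * (y * y)) :=
        mul_le_mul_of_nonneg_right (hρ i) (mul_nonneg hnonneg (mul_self_nonneg y))

end Spectral

section SecondMoments

variable {Ω ι κ : Type*} [Fintype ι] [Fintype κ] {m0 : MeasurableSpace Ω} {P : Measure Ω}

theorem MeasureTheory.MemLp.mulVec {p : ENNReal} {X : Ω → ι → ℝ} (hX : MemLp X p P)
    (A : Matrix κ ι ℝ) :
    MemLp (fun ω => A *ᵥ X ω) p P :=
  (Matrix.mulVecLin A).toContinuousLinearMap.comp_memLp' hX

theorem MeasureTheory.MemLp.dotProduct_const {p : ENNReal} {X : Ω → ι → ℝ} (hX : MemLp X p P)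
    (a : ι → ℝ) :
    MemLp (fun ω => X ω ⬝ᵥ a) p P :=
  memLp_finsetSum _ fun i _ => (hX.eval i).mul_const (a i)

theorem integrable_eval_mul {X : Ω → ι → ℝ} {Y : Ω → ℝ} (hX : MemLp X 2 P) (hY : MemLp Y 2 P)
    (i : ι) : Integrable (fun ω => X ω i * Y ω) P :=
  (hX.eval i).integrable_mul hY

theorem integrable_eval_mul_eval {X : Ω → ι → ℝ} {Y : Ω → κ → ℝ} (hX : MemLp X 2 P)
    (hY : MemLp Y 2 P) (i : ι) (j : κ) : Integrable (fun ω => X ω i * Y ω j) P :=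
  integrable_eval_mul hX (hY.eval j) i

theorem integral_sum_sum_mul {X : Ω → ι → ℝ} {Y : Ω → κ → ℝ} (hX : MemLp X 2 P)
    (hY : MemLp Y 2 P) (c : ι → κ → ℝ) :
    ∫ ω, ∑ i, ∑ j, c i j * (X ω i * Y ω j) ∂P = ∑ i, ∑ j, c i j * ∫ ω, X ω i * Y ω j ∂P := by
  rw [integral_finsetSum _ fun i _ => integrable_finsetSum _ fun j _ =>
    (integrable_eval_mul_eval hX hY i j).const_mul _]
  refine Finset.sum_congr rfl fun i _ => ?_
  rw [integral_finsetSum _ fun j _ => (integrable_eval_mul_eval hX hY i j).const_mul _]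
  simp only [integral_const_mul]

theorem dotProduct_mulVec_eq_sum_sum (x z : ι → ℝ) (A : Matrix ι ι ℝ) :
    x ⬝ᵥ (A *ᵥ z) = ∑ i, ∑ j, A i j * (x i * z j) := by
  simp only [dotProduct, mulVec, Finset.mul_sum]
  exact Finset.sum_congr rfl fun i _ => Finset.sum_congr rfl fun j _ => by ring

theorem integrable_dotProduct_mulVec_s10 {X Y : Ω → ι → ℝ} (hX : MemLp X 2 P) (hY : MemLp Y 2 P)
    (A : Matrix ι ι ℝ) : Integrable (fun ω => X ω ⬝ᵥ (A *ᵥ Y ω)) P := by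
  simp only [dotProduct_mulVec_eq_sum_sum]
  exact integrable_finsetSum _ fun i _ => integrable_finsetSum _ fun j _ =>
    (integrable_eval_mul_eval hX hY i j).const_mul _

theorem integral_dotProduct_mulVec_s10 {X Y : Ω → ι → ℝ} (hX : MemLp X 2 P) (hY : MemLp Y 2 P)
    (A : Matrix ι ι ℝ) :
    ∫ ω, X ω ⬝ᵥ (A *ᵥ Y ω) ∂P = ∑ i, ∑ j, A i j * ∫ ω, X ω i * Y ω j ∂P := by
  simp only [dotProduct_mulVec_eq_sum_sum]
  exact integral_sum_sum_mul hX hY _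

theorem integral_dotProduct_mul_dotProduct_s10 {X : Ω → ι → ℝ} (hX : MemLp X 2 P)
    {M : Matrix ι ι ℝ} (hM : ∀ i j, M i j = ∫ ω, X ω i * X ω j ∂P) (a c : ι → ℝ) :
    ∫ ω, (X ω ⬝ᵥ a) * (X ω ⬝ᵥ c) ∂P = a ⬝ᵥ (M *ᵥ c) := by
  have hexp : ∀ ω, (X ω ⬝ᵥ a) * (X ω ⬝ᵥ c) = ∑ i, ∑ j, (a i * c j) * (X ω i * X ω j) := by
    intro ω
    simp only [dotProduct, Finset.sum_mul_sum]
    exact Finset.sum_congr rfl fun i _ => Finset.sum_congr rfl fun j _ => by ring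
  simp only [hexp, integral_sum_sum_mul hX hX, ← hM, dotProduct_mulVec_eq_sum_sum]
  exact Finset.sum_congr rfl fun i _ => Finset.sum_congr rfl fun j _ => by ring

theorem integral_dotProduct_mul_s10 {X : Ω → ι → ℝ} {Y : Ω → ℝ} (hX : MemLp X 2 P) (hY : MemLp Y 2 P)
    {b : ι → ℝ} (hb : ∀ i, b i = ∫ ω, X ω i * Y ω ∂P) (a : ι → ℝ) :
    ∫ ω, (X ω ⬝ᵥ a) * Y ω ∂P = a ⬝ᵥ b := by
  have hexp : ∀ ω, (X ω ⬝ᵥ a) * Y ω = ∑ i, a i * (X ω i * Y ω) := fun ω => by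
    simp only [dotProduct, Finset.sum_mul]
    exact Finset.sum_congr rfl fun i _ => by ring
  simp only [hexp]
  rw [integral_finsetSum _ fun i _ => (integrable_eval_mul hX hY i).const_mul (a i)]
  simp only [integral_const_mul, hb, dotProduct]

theorem integral_sq_sub_dotProduct_s10 {X : Ω → ι → ℝ} {Y : Ω → ℝ} (hX : MemLp X 2 P)
    (hY : MemLp Y 2 P) {M : Matrix ι ι ℝ} (hM : ∀ i j, M i j = ∫ ω, X ω i * X ω j ∂P)
    {b : ι → ℝ} (hb : ∀ i, b i = ∫ ω, X ω i * Y ω ∂P) {w : ι → ℝ} (hw : M *ᵥ w = b)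
    (v : ι → ℝ) :
    ∫ ω, (Y ω - X ω ⬝ᵥ v) ^ 2 ∂P
      = ∫ ω, (Y ω - X ω ⬝ᵥ w) ^ 2 ∂P + (v - w) ⬝ᵥ (M *ᵥ (v - w)) := by
  set d := v - w
  have hexp : ∀ ω, (Y ω - X ω ⬝ᵥ v) ^ 2 = (Y ω - X ω ⬝ᵥ w) ^ 2
      - 2 * ((X ω ⬝ᵥ d) * Y ω - (X ω ⬝ᵥ d) * (X ω ⬝ᵥ w)) + (X ω ⬝ᵥ d) * (X ω ⬝ᵥ d) := by
    intro ω
    have : X ω ⬝ᵥ v = X ω ⬝ᵥ w + X ω ⬝ᵥ d := by rw [← dotProduct_add, add_sub_cancel]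
    rw [this]; ring
  have hXd := hX.dotProduct_const d
  have hXw := hX.dotProduct_const w
  have iYd : Integrable (fun ω => (X ω ⬝ᵥ d) * Y ω) P := hXd.integrable_mul hY
  have iwd : Integrable (fun ω => (X ω ⬝ᵥ d) * (X ω ⬝ᵥ w)) P := hXd.integrable_mul hXw
  have idd : Integrable (fun ω => (X ω ⬝ᵥ d) * (X ω ⬝ᵥ d)) P := hXd.integrable_mul hXd
  have iee : Integrable (fun ω => (Y ω - X ω ⬝ᵥ w) ^ 2) P := (hY.sub hXw).integrable_sq
  simp only [hexp]
  rw [integral_add (by fun_prop) idd, integral_sub iee (by fun_prop), integral_const_mul,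
    integral_sub iYd iwd,
    integral_dotProduct_mul_s10 hX hY hb, integral_dotProduct_mul_dotProduct_s10 hX hM,
    integral_dotProduct_mul_dotProduct_s10 hX hM, hw]
  ring

theorem integral_mul_eq_of_condExp_ae_eq {m : MeasurableSpace Ω}
    (hm : m ≤ m0) [SigmaFinite (P.trim hm)] {φ f ψ : Ω → ℝ} (hφ : StronglyMeasurable[m] φ)
    (hφf : Integrable (φ * f) P) (hf : Integrable f P) (hψ : P[f | m] =ᵐ[P] ψ) :
    ∫ ω, φ ω * f ω ∂P = ∫ ω, φ ω * ψ ω ∂P := by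
  rw [← integral_condExp hm]
  refine integral_congr_ae ?_
  filter_upwards [condExp_mul_of_stronglyMeasurable_left hφ hφf hf, hψ] with ω h1 h2
  rw [← Pi.mul_def, h1, Pi.mul_apply, h2]

theorem integral_dotProduct_mulVec_sub_smul_of_condExp [IsProbabilityMeasure P]
    {m : MeasurableSpace Ω} (hm : m ≤ m0) {U H : Ω → ι → ℝ} (hUm : Measurable[m] U)
    (hU : MemLp U 2 P) (hH : MemLp H 2 P) (hmean : ∀ i, P[fun ω => H ω i | m] =ᵐ[P] 0)
    {G : Matrix ι ι ℝ} (hcov : ∀ i j, P[fun ω => H ω i * H ω j | m] =ᵐ[P] fun _ => G i j)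
    (A : Matrix ι ι ℝ) (ε : ℝ) :
    ∫ ω, (U ω - ε • H ω) ⬝ᵥ (A *ᵥ (U ω - ε • H ω)) ∂P
      = ∫ ω, U ω ⬝ᵥ (A *ᵥ U ω) ∂P + ε ^ 2 * (Aᵀ * G).trace := by
  have hUH : ∀ i j, ∫ ω, U ω i * H ω j ∂P = 0 := fun i j => by
    rw [integral_mul_eq_of_condExp_ae_eq (φ := fun ω => U ω i) hm
      ((measurable_pi_apply i).comp hUm).stronglyMeasurable (integrable_eval_mul_eval hU hH i j)
      ((hH.eval j).integrable one_le_two) (hmean j)]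
    simp
  have hHH : ∀ i j, ∫ ω, H ω i * H ω j ∂P = G i j := fun i j => by
    rw [← integral_condExp hm, integral_congr_ae (hcov i j)]
    simp
  have hcoord : ∀ i j, ∫ ω, (U ω - ε • H ω) i * (U ω - ε • H ω) j ∂P
      = ∫ ω, U ω i * U ω j ∂P + ε ^ 2 * G i j := fun i j => by
    have iUU := integrable_eval_mul_eval hU hU i j
    have iUH := integrable_eval_mul_eval hU hH i j
    have iHU := integrable_eval_mul_eval hU hH j i
    have iHH := integrable_eval_mul_eval hH hH i j
    have hexp : ∀ ω, (U ω - ε • H ω) i * (U ω - ε • H ω) j = U ω i * U ω j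
        - ε * (U ω i * H ω j) - ε * (U ω j * H ω i) + ε ^ 2 * (H ω i * H ω j) := fun ω => by
      simp only [Pi.sub_apply, Pi.smul_apply, smul_eq_mul]; ring
    simp only [hexp]
    rw [integral_add (by fun_prop) (by fun_prop), integral_sub (by fun_prop) (by fun_prop),
      integral_sub iUU (by fun_prop), integral_const_mul, integral_const_mul, integral_const_mul,
      hUH, hUH, hHH]
    ring
  have hUεH : MemLp (fun ω => U ω - ε • H ω) 2 P := hU.sub (hH.const_smul ε)
  rw [integral_dotProduct_mulVec_s10 hUεH hUεH, integral_dotProduct_mulVec_s10 hU hU]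
  simp only [hcoord, mul_add, Finset.sum_add_distrib]
  congr 1
  simp only [trace, diag, mul_apply, transpose_apply, Finset.mul_sum]
  rw [Finset.sum_comm]
  exact Finset.sum_congr rfl fun i _ => Finset.sum_congr rfl fun j _ => by ring

end SecondMoments

section ScheduledIteration

variable {Ω ι : Type*} [Fintype ι] {m0 : MeasurableSpace Ω} {P : Measure Ω}

theorem MeasureTheory.memLp_two_of_integrable_eval_mul_self {X : Ω → ι → ℝ}
    (hXm : ∀ i, AEStronglyMeasurable (fun ω => X ω i) P)
    (hX : ∀ i, Integrable (fun ω => X ω i * X ω i) P) : MemLp X 2 P :=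
  memLp_pi_iff.2 fun i => (memLp_two_iff_integrable_sq (hXm i)).2 (by simpa only [sq] using hX i)

theorem MeasureTheory.memLp_of_succ_eq_sub_smul_or_eq {E : Type*} [NormedAddCommGroup E]
    [NormedSpace ℝ E] {p : ENNReal} {w g : ℕ → Ω → E} {ε : ℝ} (h0 : MemLp (w 0) p P)
    (hwm : ∀ k, AEStronglyMeasurable (w k) P) (hg : ∀ k, MemLp (g k) p P)
    (hstep : ∀ k ω, w (k + 1) ω = w k ω - ε • g k ω ∨ w (k + 1) ω = w k ω) :
    ∀ k, MemLp (w k) p P := by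
  intro k
  induction k with
  | zero => exact h0
  | succ k ih =>
    refine ((ih.sub ((hg k).const_smul ε)).norm.add ih.norm).mono' (hwm (k + 1)) ?_
    exact .of_forall fun ω => by rcases hstep k ω with h | h <;> simp [h]

theorem apply_ite_le_add {α : Type*} (f : α → ℝ) {lam : ℝ} (hlam : 0 ≤ lam) (a b : α) :
    f (if f a - f b ≤ -lam then a else b) ≤ f a + lam := by
  split_ifs with h <;> linarith

theorem integral_eq_add_half_dotProduct_mulVec [IsProbabilityMeasure P] {J : (ι → ℝ) → ℝ}
    {A : Matrix ι ι ℝ} {c : ℝ} {wstar : ι → ℝ}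
    (hJ : ∀ v, J v = c + 1 / 2 * ((v - wstar) ⬝ᵥ (A *ᵥ (v - wstar)))) {V : Ω → ι → ℝ}
    (hV : MemLp V 2 P) :
    Integrable (fun ω => J (V ω)) P ∧
      ∫ ω, J (V ω) ∂P = c + 1 / 2 * ∫ ω, (V ω - wstar) ⬝ᵥ (A *ᵥ (V ω - wstar)) ∂P := by
  have hVw : MemLp (fun ω => V ω - wstar) 2 P := hV.sub (memLp_const wstar)
  have hq := integrable_dotProduct_mulVec_s10 hVw hVw A
  simp only [hJ]
  exact ⟨by fun_prop, by rw [integral_add (by fun_prop) (by fun_prop), integral_const_mul]; simp⟩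

theorem le_integral_of_eq_add_half_dotProduct_mulVec [IsProbabilityMeasure P]
    {J : (ι → ℝ) → ℝ} {A : Matrix ι ι ℝ} (hA : A.PosSemidef) {c : ℝ} {wstar : ι → ℝ}
    (hJ : ∀ v, J v = c + 1 / 2 * ((v - wstar) ⬝ᵥ (A *ᵥ (v - wstar)))) {V : Ω → ι → ℝ}
    (hV : MemLp V 2 P) : c ≤ ∫ ω, J (V ω) ∂P := by
  rw [(integral_eq_add_half_dotProduct_mulVec hJ hV).2]
  have hq : 0 ≤ ∫ ω, (V ω - wstar) ⬝ᵥ (A *ᵥ (V ω - wstar)) ∂P :=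
    integral_nonneg fun ω => by simpa using hA.dotProduct_mulVec_nonneg (V ω - wstar)
  linarith

variable [DecidableEq ι] {A G : Matrix ι ι ℝ} {b wstar : ι → ℝ} {ε ρ : ℝ}

theorem integral_dotProduct_mulVec_sub_smul_le [IsProbabilityMeasure P] (hA : A.PosSemidef)
    (hρ : ∀ i, (1 - ε * hA.1.eigenvalues i) ^ 2 ≤ ρ) (hb : A *ᵥ wstar = b) {W g : Ω → ι → ℝ}
    (hWm : Measurable W) (hW : MemLp W 2 P) (hg : MemLp g 2 P)
    (hmean : ∀ i, P[fun ω => g ω i | MeasurableSpace.comap W inferInstance]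
      =ᵐ[P] fun ω => (A *ᵥ W ω - b) i)
    (hcov : ∀ i j, P[fun ω => (g ω i - (A *ᵥ W ω - b) i) * (g ω j - (A *ᵥ W ω - b) j) |
      MeasurableSpace.comap W inferInstance] =ᵐ[P] fun _ => G i j) :
    ∫ ω, (W ω - ε • g ω - wstar) ⬝ᵥ (A *ᵥ (W ω - ε • g ω - wstar)) ∂P
      ≤ ρ * ∫ ω, (W ω - wstar) ⬝ᵥ (A *ᵥ (W ω - wstar)) ∂P + ε ^ 2 * (A * G).trace := by
  set m := MeasurableSpace.comap W inferInstance
  have hm : m ≤ m0 := hWm.comap_le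
  have hWm' : Measurable[m] W := comap_measurable W
  set U := fun ω => (W ω - wstar) - ε • (A *ᵥ (W ω - wstar))
  set H := fun ω => g ω - (A *ᵥ W ω - b)
  -- `A W - b = A (W - w⋆)`: the step is the deterministic contraction `U` plus centred noise `H`.
  have hsplit : ∀ ω, W ω - ε • g ω - wstar = U ω - ε • H ω := fun ω => by
    simp only [U, H, ← hb, ← mulVec_sub]; module
  have hu : MemLp (fun ω => W ω - wstar) 2 P := hW.sub (memLp_const wstar)
  have hU : MemLp U 2 P := hu.sub ((hu.mulVec A).const_smul ε)
  have hAW : MemLp (fun ω => A *ᵥ W ω - b) 2 P := (hW.mulVec A).sub (memLp_const b)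
  have hH : MemLp H 2 P := hg.sub hAW
  have hUm : Measurable[m] U :=
    (Continuous.measurable (f := fun v => (v - wstar) - ε • (A *ᵥ (v - wstar)))
      (by fun_prop)).comp hWm'
  have hmeanH : ∀ i, P[fun ω => H ω i | m] =ᵐ[P] 0 := fun i => by
    have hAWm : StronglyMeasurable[m] fun ω => (A *ᵥ W ω - b) i :=
      ((Continuous.measurable (f := fun v => (A *ᵥ v - b) i) (by fun_prop)).comp
        hWm').stronglyMeasurable
    filter_upwards [condExp_sub ((hg.eval i).integrable one_le_two)
      ((hAW.eval i).integrable one_le_two) m, hmean i] with ω h1 h2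
    change P[(fun ω => g ω i) - fun ω => (A *ᵥ W ω - b) i | m] ω = 0
    rw [h1, Pi.sub_apply, h2,
      condExp_of_stronglyMeasurable hm hAWm ((hAW.eval i).integrable one_le_two), sub_self]
  have hAt : Aᵀ = A := by rw [← conjTranspose_eq_transpose_of_trivial]; exact hA.1.eq
  calc ∫ ω, (W ω - ε • g ω - wstar) ⬝ᵥ (A *ᵥ (W ω - ε • g ω - wstar)) ∂P
      = ∫ ω, U ω ⬝ᵥ (A *ᵥ U ω) ∂P + ε ^ 2 * (A * G).trace := by
        simp only [hsplit]
        rw [integral_dotProduct_mulVec_sub_smul_of_condExp hm hUm hU hH hmeanH hcov, hAt]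
    _ ≤ ρ * ∫ ω, (W ω - wstar) ⬝ᵥ (A *ᵥ (W ω - wstar)) ∂P + ε ^ 2 * (A * G).trace := by
        rw [← integral_const_mul]
        refine add_le_add (integral_mono (integrable_dotProduct_mulVec_s10 hU hU A)
          ((integrable_dotProduct_mulVec_s10 hu hu A).const_mul ρ)
          fun ω => hA.dotProduct_mulVec_sub_smul_mulVec_le_s10 hρ _) le_rfl

theorem integral_scheduled_step_sub_le [IsProbabilityMeasure P] (hA : A.PosSemidef)
    (hρ : ∀ i, (1 - ε * hA.1.eigenvalues i) ^ 2 ≤ ρ) (hb : A *ᵥ wstar = b) {lam : ℝ}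
    (hlam : 0 ≤ lam) {J : (ι → ℝ) → ℝ}
    (hJ : ∀ v, J v = J wstar + 1 / 2 * ((v - wstar) ⬝ᵥ (A *ᵥ (v - wstar))))
    {W W' g : Ω → ι → ℝ} (hWm : Measurable W) (hW : MemLp W 2 P) (hW' : MemLp W' 2 P)
    (hg : MemLp g 2 P)
    (hmean : ∀ i, P[fun ω => g ω i | MeasurableSpace.comap W inferInstance]
      =ᵐ[P] fun ω => (A *ᵥ W ω - b) i)
    (hcov : ∀ i j, P[fun ω => (g ω i - (A *ᵥ W ω - b) i) * (g ω j - (A *ᵥ W ω - b) j) |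
      MeasurableSpace.comap W inferInstance] =ᵐ[P] fun _ => G i j)
    (hstep : ∀ ω, W' ω =
      if J (W ω - ε • g ω) - J (W ω) ≤ -lam then W ω - ε • g ω else W ω) :
    ∫ ω, J (W' ω) ∂P - J wstar
      ≤ ρ * (∫ ω, J (W ω) ∂P - J wstar) + (lam + ε ^ 2 / 2 * (A * G).trace) := by
  obtain ⟨hJW', -⟩ := integral_eq_add_half_dotProduct_mulVec hJ hW'
  obtain ⟨-, hJW⟩ := integral_eq_add_half_dotProduct_mulVec hJ hW
  have hWg : MemLp (fun ω => W ω - ε • g ω) 2 P := hW.sub (hg.const_smul ε)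
  obtain ⟨hJWg, hJWg_eq⟩ := integral_eq_add_half_dotProduct_mulVec hJ hWg
  have hdescent : ∫ ω, J (W' ω) ∂P ≤ ∫ ω, J (W ω - ε • g ω) ∂P + lam :=
    calc ∫ ω, J (W' ω) ∂P ≤ ∫ ω, (J (W ω - ε • g ω) + lam) ∂P :=
          integral_mono hJW' (hJWg.add (integrable_const lam)) fun ω =>
            (hstep ω).symm ▸ apply_ite_le_add J hlam _ _
      _ = ∫ ω, J (W ω - ε • g ω) ∂P + lam := by
          rw [integral_add hJWg (integrable_const lam)]; simp
  have hnoise := integral_dotProduct_mulVec_sub_smul_le hA hρ hb hWm hW hg hmean hcov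
  rw [hJWg_eq] at hdescent
  rw [hJW]
  linarith

end ScheduledIteration

theorem stmt10_general {n : ℕ} [NeZero n] (μ : Measure ((Fin n → ℝ) × ℝ)) [IsProbabilityMeasure μ]
    (hxx : ∀ i j : Fin n, Integrable (fun p => p.1 i * p.1 j) μ)
    (hyy : Integrable (fun p => p.2 ^ 2) μ)
    (J : (Fin n → ℝ) → ℝ)
    (hJ : ∀ w : Fin n → ℝ, J w = (1 / 2) * ∫ p, (p.2 - p.1 ⬝ᵥ w) ^ 2 ∂μ)
    (Exx : Matrix (Fin n) (Fin n) ℝ)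
    (hExx : ∀ i j, Exx i j = ∫ p, p.1 i * p.1 j ∂μ)
    (Exy : Fin n → ℝ)
    (hExy : ∀ i, Exy i = ∫ p, p.1 i * p.2 ∂μ)
    (Sx : Matrix (Fin n) (Fin n) ℝ) (hSx : Sx = (1 / 2 : ℝ) • Exx)
    (wstar : Fin n → ℝ) (hws : Exx *ᵥ wstar = Exy)
    {Ω : Type*} [MeasurableSpace Ω] (P : Measure Ω) [IsProbabilityMeasure P]
    (lam ε : ℝ) (hlam : 0 < lam)
    (w g : ℕ → Ω → Fin n → ℝ)
    (hwmeas : ∀ k, Measurable (w k))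
    (w0 : Fin n → ℝ) (hw0 : ∀ ω, w 0 ω = w0)
    (G : Matrix (Fin n) (Fin n) ℝ)
    (hgi : ∀ k i, Integrable (fun ω => g k ω i) P)
    (hgij : ∀ k i j, Integrable (fun ω => g k ω i * g k ω j) P)
    (hmean : ∀ k i, P[(fun ω => g k ω i) | MeasurableSpace.comap (w k) inferInstance]
      =ᵐ[P] fun ω => (Exx *ᵥ w k ω - Exy) i)
    (hcov : ∀ k i j,
      P[(fun ω => (g k ω i - (Exx *ᵥ w k ω - Exy) i) * (g k ω j - (Exx *ᵥ w k ω - Exy) j)) |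
          MeasurableSpace.comap (w k) inferInstance]
        =ᵐ[P] fun _ => G i j)
    (hstep : ∀ k ω, w (k + 1) ω =
      if J (w k ω - ε • g k ω) - J (w k ω) ≤ -lam then w k ω - ε • g k ω else w k ω)
    (hherm : Exx.IsHermitian)
    (ρ : ℝ)
    (hρ : ρ = Finset.univ.sup' Finset.univ_nonempty
      fun i => (1 - ε * hherm.eigenvalues i) ^ 2)
    (hρ1 : ρ < 1) :
    Filter.limsup (fun N => ∫ ω, J (w N ω) ∂P) Filter.atTop
      ≤ J wstar + (lam + ε ^ 2 * (Sx * G).trace) / (1 - ρ) := by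
  have hx : MemLp (fun p : (Fin n → ℝ) × ℝ => p.1) 2 μ :=
    memLp_two_of_integrable_eval_mul_self (fun i => by fun_prop) fun i => hxx i i
  have hy : MemLp (fun p : (Fin n → ℝ) × ℝ => p.2) 2 μ :=
    (memLp_two_iff_integrable_sq (by fun_prop)).2 hyy
  have hJq : ∀ v, J v = J wstar + 1 / 2 * ((v - wstar) ⬝ᵥ (Exx *ᵥ (v - wstar))) := fun v => by
    rw [hJ, hJ, integral_sq_sub_dotProduct_s10 hx hy hExx hExy hws v]; ring
  have hpsd : Exx.PosSemidef := .of_dotProduct_mulVec_nonneg hherm fun v => by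
    rw [star_trivial, ← integral_dotProduct_mul_dotProduct_s10 hx hExx]
    exact integral_nonneg fun p => mul_self_nonneg _
  have hρi : ∀ i, (1 - ε * hpsd.1.eigenvalues i) ^ 2 ≤ ρ := fun i =>
    hρ ▸ Finset.le_sup' (fun i => (1 - ε * hherm.eigenvalues i) ^ 2) (Finset.mem_univ i)
  have hg : ∀ k, MemLp (g k) 2 P := fun k =>
    memLp_two_of_integrable_eval_mul_self (fun i => (hgi k i).1) fun i => hgij k i i
  have hw : ∀ k, MemLp (w k) 2 P :=
    memLp_of_succ_eq_sub_smul_or_eq (ε := ε) (by rw [funext hw0]; exact memLp_const w0)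
      (fun k => (hwmeas k).aestronglyMeasurable) hg fun k ω => by rw [hstep k ω]; split_ifs <;> simp
  have hrec : ∀ k, ∫ ω, J (w (k + 1) ω) ∂P - J wstar
      ≤ ρ * (∫ ω, J (w k ω) ∂P - J wstar) + (lam + ε ^ 2 * (Sx * G).trace) := fun k => by
    have := integral_scheduled_step_sub_le hpsd hρi hws hlam.le hJq (hwmeas k) (hw k) (hw (k + 1))
      (hg k) (hmean k) (hcov k) (hstep k)
    rwa [hSx, Matrix.smul_mul, trace_smul, smul_eq_mul, ← mul_assoc, mul_one_div]
  exact limsup_le_add_div_of_sub_le_mul_sub ((sq_nonneg _).trans (hρi 0)) hρ1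
    (fun N => le_integral_of_eq_add_half_dotProduct_mulVec hpsd hJq (hw N)) hrec

theorem stmt10 {n : ℕ} [NeZero n] (μ : Measure ((Fin n → ℝ) × ℝ)) [IsProbabilityMeasure μ]
    (hxx : ∀ i j : Fin n, Integrable (fun p => p.1 i * p.1 j) μ)
    (hxy : ∀ i : Fin n, Integrable (fun p => p.1 i * p.2) μ)
    (hyy : Integrable (fun p => p.2 ^ 2) μ)
    (J : (Fin n → ℝ) → ℝ)
    (hJ : ∀ w : Fin n → ℝ, J w = (1 / 2) * ∫ p, (p.2 - p.1 ⬝ᵥ w) ^ 2 ∂μ)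
    (Exx : Matrix (Fin n) (Fin n) ℝ)
    (hExx : ∀ i j, Exx i j = ∫ p, p.1 i * p.1 j ∂μ)
    (Exy : Fin n → ℝ)
    (hExy : ∀ i, Exy i = ∫ p, p.1 i * p.2 ∂μ)
    (Sx : Matrix (Fin n) (Fin n) ℝ) (hSx : Sx = (1 / 2 : ℝ) • Exx)
    (wstar : Fin n → ℝ) (hws : Exx *ᵥ wstar = Exy)
    {Ω : Type*} [MeasurableSpace Ω] (P : Measure Ω) [IsProbabilityMeasure P]
    (lam ε : ℝ) (hlam : 0 < lam) (hε : 0 < ε)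
    (w g : ℕ → Ω → Fin n → ℝ)
    (hwmeas : ∀ k, Measurable (w k))
    (w0 : Fin n → ℝ) (hw0 : ∀ ω, w 0 ω = w0)
    (G : Matrix (Fin n) (Fin n) ℝ)
    (hgi : ∀ k i, Integrable (fun ω => g k ω i) P)
    (hgij : ∀ k i j, Integrable (fun ω => g k ω i * g k ω j) P)
    (hwgi : ∀ k i j, Integrable (fun ω => w k ω i * g k ω j) P)
    (hJw : ∀ k, Integrable (fun ω => J (w k ω)) P)
    (hJwg : ∀ k, Integrable (fun ω => J (w k ω - ε • g k ω)) P)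
    (hmean : ∀ k i, P[(fun ω => g k ω i) | MeasurableSpace.comap (w k) inferInstance]
      =ᵐ[P] fun ω => (Exx *ᵥ w k ω - Exy) i)
    (hcov : ∀ k i j,
      P[(fun ω => (g k ω i - (Exx *ᵥ w k ω - Exy) i) * (g k ω j - (Exx *ᵥ w k ω - Exy) j)) |
          MeasurableSpace.comap (w k) inferInstance]
        =ᵐ[P] fun _ => G i j)
    (hstep : ∀ k ω, w (k + 1) ω =
      if J (w k ω - ε • g k ω) - J (w k ω) ≤ -lam then w k ω - ε • g k ω else w k ω)
    (hherm : Exx.IsHermitian)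
    (ρ : ℝ)
    (hρ : ρ = Finset.univ.sup' Finset.univ_nonempty
      fun i => (1 - ε * hherm.eigenvalues i) ^ 2)
    (hρ1 : ρ < 1) :
    Filter.limsup (fun N => ∫ ω, J (w N ω) ∂P) Filter.atTop
      ≤ J wstar + (lam + ε ^ 2 * (Sx * G).trace) / (1 - ρ) :=
  stmt10_general μ hxx hyy J hJ Exx hExx Exy hExy Sx hSx wstar hws P lam ε hlam w g hwmeas w0 hw0 G
    hgi hgij hmean hcov hstep hherm ρ hρ hρ1
end
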